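/- Let A be a positive operator on H and T, S A-bounded operators. Then r_A(TS ± ST) ≤ ½(‖TS‖_A + ‖ST‖_A + √((‖TS‖_A − ‖ST‖_A)² + 4‖T²‖_A ‖S²‖_A)). -/

import Mathlib

/-!
For `X = T₁ S₁ + T₂ S₂` every power factors as `X ^ (n + 1) = T₁ Yₙ + T₂ Zₙ`, with `Y₀ = S₁`,
`Z₀ = S₂` and `(Yₙ₊₁, Zₙ₊₁) = (S₁T₁ Yₙ + S₁T₂ Zₙ, S₂T₁ Yₙ + S₂T₂ Zₙ)`. Hence `(‖Yₙ‖_A, ‖Zₙ‖_A)` is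
dominated by the powers of the nonnegative matrix `M = (‖SᵢTⱼ‖_A)`, and comparing with a positive
eigenvector of `M` gives `‖X ^ (n + 1)‖_A = O(ρ(M) ^ n)`, so `r_A(X) ≤ ρ(M)`. Such an eigenvector
exists once the off-diagonal entries of `M` are increased by `ε > 0`; then let `ε → 0`.
The operators `TS ± ST` are the cases `(T₁, S₁, T₂, S₂) = (±S, T, T, S)`.
-/

open ContinuousLinearMap

variable {H : Type*} [NormedAddCommGroup H] [InnerProductSpace ℂ H] [CompleteSpace H]

/-- The seminorm `‖x‖_A = ‖A^{1/2} x‖ = √⟨Ax, x⟩` induced by a positive operator `A`. -/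
noncomputable def anorm (A : H →L[ℂ] H) (x : H) : ℝ :=
  Real.sqrt (A.reApplyInnerSelf x)

/-- `T` is `A`-bounded: `‖Tx‖_A ≤ c ‖x‖_A` for some `c > 0`. -/
def ABounded (A T : H →L[ℂ] H) : Prop :=
  ∃ c : ℝ, 0 < c ∧ ∀ x : H, anorm A (T x) ≤ c * anorm A x

/-- The operator seminorm `‖T‖_A`: the least `c ≥ 0` with `‖Tx‖_A ≤ c ‖x‖_A` for all `x`. -/
noncomputable def aNorm (A T : H →L[ℂ] H) : ℝ :=
  sInf {c : ℝ | 0 ≤ c ∧ ∀ x : H, anorm A (T x) ≤ c * anorm A x}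

/-- The `A`-spectral radius `r_A(T) = inf_{n ≥ 1} ‖T^n‖_A^{1/n}`. -/
noncomputable def aSpecRad (A T : H →L[ℂ] H) : ℝ :=
  ⨅ n : ℕ+, aNorm A (T ^ (n : ℕ)) ^ ((n : ℝ)⁻¹)

/-- The `A`-numerical radius `ω_A(T) = sup {|⟨ATx, x⟩| : ‖x‖_A = 1}`. -/
noncomputable def aNumRad (A T : H →L[ℂ] H) : ℝ :=
  sSup {c : ℝ | ∃ x : H, anorm A x = 1 ∧ c = ‖(inner ℂ (A (T x)) x : ℂ)‖}

section Seminorm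

variable {A X Y : H →L[ℂ] H}

lemma anorm_nonneg (A : H →L[ℂ] H) (x : H) : 0 ≤ anorm A x := Real.sqrt_nonneg _

lemma anorm_neg (A : H →L[ℂ] H) (x : H) : anorm A (-x) = anorm A x := by
  simp [anorm, reApplyInnerSelf]

lemma anorm_eq_norm_sqrt (hA : A.IsPositive) (x : H) : anorm A x = ‖CFC.sqrt A x‖ := by
  have hsa : IsSelfAdjoint (CFC.sqrt A) := IsSelfAdjoint.of_nonneg (CFC.sqrt_nonneg A)
  have hsq : A.reApplyInnerSelf x = ‖CFC.sqrt A x‖ ^ 2 := by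
    conv_lhs => rw [← CFC.sqrt_mul_sqrt_self A ((nonneg_iff_isPositive A).2 hA)]
    rw [reApplyInnerSelf, mul_apply_eq_comp, ← hsa.adjoint_eq, adjoint_inner_left,
      hsa.adjoint_eq, inner_self_eq_norm_sq]
  rw [anorm, hsq, Real.sqrt_sq (norm_nonneg _)]

lemma anorm_add_le (hA : A.IsPositive) (x y : H) : anorm A (x + y) ≤ anorm A x + anorm A y := by
  simp only [anorm_eq_norm_sqrt hA, map_add]
  exact norm_add_le _ _

lemma aNorm_nonneg (A X : H →L[ℂ] H) : 0 ≤ aNorm A X :=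
  Real.sInf_nonneg fun _ hc => hc.1

lemma aNorm_le_of_forall {c : ℝ} (hc : 0 ≤ c) (h : ∀ x, anorm A (X x) ≤ c * anorm A x) :
    aNorm A X ≤ c :=
  csInf_le ⟨0, fun _ hb => hb.1⟩ ⟨hc, h⟩

lemma aNorm_neg (A X : H →L[ℂ] H) : aNorm A (-X) = aNorm A X := by
  simp only [aNorm, neg_apply, anorm_neg]

lemma ABounded.anorm_apply_le (hX : ABounded A X) (x : H) :
    anorm A (X x) ≤ aNorm A X * anorm A x := by
  obtain ⟨c, hc, hb⟩ := hX
  rcases (anorm_nonneg A x).eq_or_lt with h0 | h0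
  · simpa [← h0] using hb x
  · rw [← div_le_iff₀ h0]
    exact le_csInf ⟨c, hc.le, hb⟩ fun b hb' => (div_le_iff₀ h0).2 (hb'.2 x)

lemma ABounded.neg (hX : ABounded A X) : ABounded A (-X) := by
  obtain ⟨c, hc, hb⟩ := hX
  exact ⟨c, hc, fun x => by simpa only [neg_apply, anorm_neg] using hb x⟩

lemma ABounded.mul (hX : ABounded A X) (hY : ABounded A Y) : ABounded A (X * Y) := by
  obtain ⟨c, hc, hXc⟩ := hX
  obtain ⟨d, hd, hYd⟩ := hY
  refine ⟨c * d, mul_pos hc hd, fun x => ?_⟩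
  calc anorm A (X (Y x)) ≤ c * anorm A (Y x) := hXc _
    _ ≤ c * (d * anorm A x) := by gcongr; exact hYd x
    _ = c * d * anorm A x := by ring

lemma ABounded.add (hA : A.IsPositive) (hX : ABounded A X) (hY : ABounded A Y) :
    ABounded A (X + Y) := by
  obtain ⟨c, hc, hXc⟩ := hX
  obtain ⟨d, hd, hYd⟩ := hY
  refine ⟨c + d, add_pos hc hd, fun x => ?_⟩
  calc anorm A (X x + Y x) ≤ anorm A (X x) + anorm A (Y x) := anorm_add_le hA _ _
    _ ≤ c * anorm A x + d * anorm A x := add_le_add (hXc x) (hYd x)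
    _ = (c + d) * anorm A x := by ring

lemma aNorm_mul_add_mul_le_of_le (hA : A.IsPositive) {P Q Y Z : H →L[ℂ] H} {y z : ℝ}
    (hP : ABounded A P) (hQ : ABounded A Q) (hY : ABounded A Y) (hZ : ABounded A Z)
    (hy : aNorm A Y ≤ y) (hz : aNorm A Z ≤ z) :
    aNorm A (P * Y + Q * Z) ≤ aNorm A P * y + aNorm A Q * z := by
  have hP0 := aNorm_nonneg A P
  have hQ0 := aNorm_nonneg A Q
  have hy0 := (aNorm_nonneg A Y).trans hy
  have hz0 := (aNorm_nonneg A Z).trans hz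
  refine aNorm_le_of_forall (by positivity) fun x => ?_
  have hx0 := anorm_nonneg A x
  calc anorm A (P (Y x) + Q (Z x)) ≤ anorm A (P (Y x)) + anorm A (Q (Z x)) := anorm_add_le hA _ _
    _ ≤ aNorm A P * anorm A (Y x) + aNorm A Q * anorm A (Z x) :=
        add_le_add (hP.anorm_apply_le _) (hQ.anorm_apply_le _)
    _ ≤ aNorm A P * (y * anorm A x) + aNorm A Q * (z * anorm A x) := by
        gcongr
        · exact (hY.anorm_apply_le x).trans (by gcongr)
        · exact (hZ.anorm_apply_le x).trans (by gcongr)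
    _ = (aNorm A P * y + aNorm A Q * z) * anorm A x := by ring

end Seminorm

lemma aSpecRad_le_aNorm_pow (A X : H →L[ℂ] H) (n : ℕ+) :
    aSpecRad A X ≤ aNorm A (X ^ (n : ℕ)) ^ ((n : ℝ)⁻¹) :=
  ciInf_le ⟨0, by rintro _ ⟨m, rfl⟩; exact Real.rpow_nonneg (aNorm_nonneg _ _) _⟩ n

lemma aSpecRad_le_of_aNorm_pow_le {A X : H →L[ℂ] H} {C R : ℝ} (hR : 0 ≤ R)
    (h : ∀ n : ℕ, aNorm A (X ^ (n + 1)) ≤ C * R ^ n) : aSpecRad A X ≤ R := by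
  refine le_of_forall_gt fun r hr => ?_
  have hr0 : 0 < r := hR.trans_lt hr
  have hC : 0 < max C 1 := lt_max_of_lt_right one_pos
  obtain ⟨n, hn⟩ := exists_pow_lt_of_lt_one (div_pos hr0 hC) ((div_lt_one hr0).2 hr)
  have hpow : aNorm A (X ^ (n + 1)) < r ^ (n + 1) := by
    rw [div_pow, div_lt_div_iff₀ (by positivity) hC] at hn
    calc aNorm A (X ^ (n + 1)) ≤ max C 1 * R ^ n := (h n).trans (by gcongr; exact le_max_left C 1)
      _ < r ^ (n + 1) := by rw [pow_succ]; linarith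
  calc aSpecRad A X ≤ aNorm A (X ^ (n + 1)) ^ (((n + 1 : ℕ) : ℝ)⁻¹) :=
        aSpecRad_le_aNorm_pow A X n.succPNat
    _ < r := (Real.rpow_inv_lt_iff_of_pos (aNorm_nonneg _ _) hr0.le (by positivity)).2
        (by exact_mod_cast hpow)

/-- The larger eigenvalue of `!![a, b; c, d]` when `0 ≤ b * c`. -/
noncomputable def perronRoot (a b c d : ℝ) : ℝ :=
  (a + d + √((a - d) ^ 2 + 4 * b * c)) / 2

lemma exists_pos_eigenvector_perronRoot {a b c d : ℝ} (hb : 0 < b) (hc : 0 < c) :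
    ∃ v > 0, a + b * v = perronRoot a b c d ∧ c + d * v = perronRoot a b c d * v := by
  unfold perronRoot
  set s := √((a - d) ^ 2 + 4 * b * c)
  have hs0 : 0 ≤ s := Real.sqrt_nonneg _
  have hs : s ^ 2 = (a - d) ^ 2 + 4 * b * c := Real.sq_sqrt (by positivity)
  have has : a - d < s := by nlinarith [mul_pos hb hc]
  refine ⟨((a + d + s) / 2 - a) / b, div_pos (by linarith) hb, ?_, ?_⟩
  · field_simp; ring
  · field_simp; linear_combination -hs

open Filter Topology

section ProductSum

variable {A T₁ S₁ T₂ S₂ : H →L[ℂ] H}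

lemma exists_pow_succ_eq_mul_add_mul (hA : A.IsPositive) (hT₁ : ABounded A T₁)
    (hS₁ : ABounded A S₁) (hT₂ : ABounded A T₂) (hS₂ : ABounded A S₂) {K R v : ℝ} (hv : 0 ≤ v)
    (h₁ : aNorm A (S₁ * T₁) + aNorm A (S₁ * T₂) * v ≤ R)
    (h₂ : aNorm A (S₂ * T₁) + aNorm A (S₂ * T₂) * v ≤ R * v)
    (hK₁ : aNorm A S₁ ≤ K) (hK₂ : aNorm A S₂ ≤ K * v) (n : ℕ) :
    ∃ Y Z, ABounded A Y ∧ ABounded A Z ∧ (T₁ * S₁ + T₂ * S₂) ^ (n + 1) = T₁ * Y + T₂ * Z ∧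
      aNorm A Y ≤ K * R ^ n ∧ aNorm A Z ≤ K * v * R ^ n := by
  induction n with
  | zero => exact ⟨S₁, S₂, hS₁, hS₂, by rw [zero_add, pow_one], by simpa, by simpa⟩
  | succ n ih =>
    obtain ⟨Y, Z, hY, hZ, hpow, hYn, hZn⟩ := ih
    have hR : 0 ≤ R := (add_nonneg (aNorm_nonneg _ _) (mul_nonneg (aNorm_nonneg _ _) hv)).trans h₁
    have hKR : 0 ≤ K * R ^ n := mul_nonneg ((aNorm_nonneg A S₁).trans hK₁) (pow_nonneg hR n)
    refine ⟨S₁ * T₁ * Y + S₁ * T₂ * Z, S₂ * T₁ * Y + S₂ * T₂ * Z,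
      ((hS₁.mul hT₁).mul hY).add hA ((hS₁.mul hT₂).mul hZ),
      ((hS₂.mul hT₁).mul hY).add hA ((hS₂.mul hT₂).mul hZ),
      by rw [pow_succ', hpow]; noncomm_ring, ?_, ?_⟩
    · calc _ ≤ aNorm A (S₁ * T₁) * (K * R ^ n) + aNorm A (S₁ * T₂) * (K * v * R ^ n) :=
            aNorm_mul_add_mul_le_of_le hA (hS₁.mul hT₁) (hS₁.mul hT₂) hY hZ hYn hZn
        _ = (aNorm A (S₁ * T₁) + aNorm A (S₁ * T₂) * v) * (K * R ^ n) := by ring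
        _ ≤ R * (K * R ^ n) := by gcongr
        _ = K * R ^ (n + 1) := by ring
    · calc _ ≤ aNorm A (S₂ * T₁) * (K * R ^ n) + aNorm A (S₂ * T₂) * (K * v * R ^ n) :=
            aNorm_mul_add_mul_le_of_le hA (hS₂.mul hT₁) (hS₂.mul hT₂) hY hZ hYn hZn
        _ = (aNorm A (S₂ * T₁) + aNorm A (S₂ * T₂) * v) * (K * R ^ n) := by ring
        _ ≤ R * v * (K * R ^ n) := by gcongr
        _ = K * v * R ^ (n + 1) := by ring

lemma aSpecRad_mul_add_mul_le_of_eigenvector (hA : A.IsPositive) (hT₁ : ABounded A T₁)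
    (hS₁ : ABounded A S₁) (hT₂ : ABounded A T₂) (hS₂ : ABounded A S₂) {R v : ℝ} (hv : 0 < v)
    (h₁ : aNorm A (S₁ * T₁) + aNorm A (S₁ * T₂) * v ≤ R)
    (h₂ : aNorm A (S₂ * T₁) + aNorm A (S₂ * T₂) * v ≤ R * v) :
    aSpecRad A (T₁ * S₁ + T₂ * S₂) ≤ R := by
  have hR : 0 ≤ R := (add_nonneg (aNorm_nonneg _ _) (mul_nonneg (aNorm_nonneg _ _) hv.le)).trans h₁
  set K := max (aNorm A S₁) (aNorm A S₂ / v)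
  refine aSpecRad_le_of_aNorm_pow_le (C := (aNorm A T₁ + aNorm A T₂ * v) * K) hR fun n => ?_
  obtain ⟨Y, Z, hY, hZ, hpow, hYn, hZn⟩ := exists_pow_succ_eq_mul_add_mul hA hT₁ hS₁ hT₂ hS₂
    hv.le h₁ h₂ (le_max_left _ _) ((div_le_iff₀ hv).1 (le_max_right _ _)) n
  rw [hpow]
  calc _ ≤ aNorm A T₁ * (K * R ^ n) + aNorm A T₂ * (K * v * R ^ n) :=
        aNorm_mul_add_mul_le_of_le hA hT₁ hT₂ hY hZ hYn hZn
    _ = (aNorm A T₁ + aNorm A T₂ * v) * K * R ^ n := by ring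

theorem aSpecRad_mul_add_mul_le (hA : A.IsPositive) (hT₁ : ABounded A T₁)
    (hS₁ : ABounded A S₁) (hT₂ : ABounded A T₂) (hS₂ : ABounded A S₂) :
    aSpecRad A (T₁ * S₁ + T₂ * S₂) ≤ perronRoot (aNorm A (S₁ * T₁)) (aNorm A (S₁ * T₂))
      (aNorm A (S₂ * T₁)) (aNorm A (S₂ * T₂)) := by
  set a := aNorm A (S₁ * T₁)
  set b := aNorm A (S₁ * T₂)
  set c := aNorm A (S₂ * T₁)
  set d := aNorm A (S₂ * T₂)
  have hlim : Tendsto (fun e => perronRoot a (b + e) (c + e) d) (𝓝[>] 0)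
      (𝓝 (perronRoot a b c d)) := by
    have hcont : Continuous fun e => perronRoot a (b + e) (c + e) d := by
      unfold perronRoot; fun_prop
    simpa using (hcont.tendsto 0).mono_left nhdsWithin_le_nhds
  refine ge_of_tendsto hlim (eventually_nhdsWithin_of_forall fun e (he : 0 < e) => ?_)
  obtain ⟨v, hv, h₁, h₂⟩ := exists_pos_eigenvector_perronRoot (a := a) (d := d)
    (add_pos_of_nonneg_of_pos (aNorm_nonneg A (S₁ * T₂)) he)
    (add_pos_of_nonneg_of_pos (aNorm_nonneg A (S₂ * T₁)) he)
  have hev := mul_pos he hv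
  exact aSpecRad_mul_add_mul_le_of_eigenvector hA hT₁ hS₁ hT₂ hS₂ hv
    (by nlinarith) (by nlinarith)

end ProductSum

/-- bound for `r_A(TS ± ST)`. -/
theorem stmt10 (A T S : H →L[ℂ] H) (hA : A.IsPositive)
    (hT : ABounded A T) (hS : ABounded A S) :
    aSpecRad A (T * S + S * T) ≤
      (aNorm A (T * S) + aNorm A (S * T) +
        Real.sqrt ((aNorm A (T * S) - aNorm A (S * T)) ^ 2 +
          4 * aNorm A (T ^ 2) * aNorm A (S ^ 2))) / 2 ∧
    aSpecRad A (T * S - S * T) ≤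
      (aNorm A (T * S) + aNorm A (S * T) +
        Real.sqrt ((aNorm A (T * S) - aNorm A (S * T)) ^ 2 +
          4 * aNorm A (T ^ 2) * aNorm A (S ^ 2))) / 2 := by
  rw [sq T, sq S]
  constructor
  · rw [add_comm]
    exact aSpecRad_mul_add_mul_le hA hS hT hT hS
  · have h := aSpecRad_mul_add_mul_le hA hS.neg hT hT hS
    simp only [mul_neg, neg_mul, aNorm_neg] at h
    rwa [sub_eq_neg_add]
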